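/- Let q be the Midzuno–Sen-style proposal q(S_k) = g(S_k)/(C(n-2,k-2)·G) over k-subsets of an n-element set S, where g is a nonnegative pair-weight function with total G > 0. For a set R of t distinct vertices (t ≤ k), the inclusion probability π(R) = Pr_{S_k~q}(R ⊆ S_k) equals (1/(C(n-2,k-2)·G)) · [ C(n-t, k-t)·∑_{{a,b}⊆R} g(a,b) + C(n-t-1, k-t-1)·∑_{r∈R, x∉R} g(r,x) + C(n-t-2, k-t-2)·∑_{{x,y}⊆S∖R} g(x,y) ]. -/

import Mathlib

/-!
A `k`-subset of `S` containing `R` is `U ∪ R` with `U` a `(k - t)`-subset of `S \ R`, and the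
pair weight of `U ∪ R` splits into the pairs inside `R`, the pairs crossing from `U` to `R`, and
the pairs inside `U`. Summing over `U`, each element of `S \ R` lies in `C(n-t-1, k-t-1)` of the
sets `U` and each pair of elements of `S \ R` in `C(n-t-2, k-t-2)` of them.
-/

open Finset

/-- Sum of a symmetric pair function `g` over all unordered pairs of distinct
elements of `T`. -/
noncomputable def pairSum {V : Type*} [DecidableEq V] (g : V → V → ℝ) (T : Finset V) : ℝ :=
  (∑ p ∈ T.offDiag, g p.1 p.2) / 2

namespace Finset

variable {α : Type*} [DecidableEq α]

theorem card_filter_powersetCard_subset_eq_ite {s t : Finset α} (hst : s ⊆ t) (n : ℕ) :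
    #{u ∈ t.powersetCard n | s ⊆ u} = if #s ≤ n then (#t - #s).choose (n - #s) else 0 := by
  split_ifs with hsn
  · exact card_filter_powersetCard_subset s t n hst hsn
  · refine card_eq_zero.2 (filter_eq_empty_iff.2 fun u hu hsu => hsn ?_)
    exact (card_le_card hsu).trans_eq (mem_powersetCard.1 hu).2

theorem sum_powersetCard_sum {R : Type*} [Semiring R] (X : Finset α) (m : ℕ) (f : α → R) :
    ∑ U ∈ X.powersetCard m, ∑ x ∈ U, f x
      = (if 1 ≤ m then ((#X - 1).choose (m - 1) : R) else 0) * ∑ x ∈ X, f x := by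
  have hcount : ∀ x ∈ X, #{U ∈ X.powersetCard m | x ∈ U}
      = if 1 ≤ m then (#X - 1).choose (m - 1) else 0 := by
    intro x hx
    simpa using card_filter_powersetCard_subset_eq_ite (singleton_subset_iff.2 hx) m
  rw [sum_comm' (t' := X) (s' := fun x => {U ∈ X.powersetCard m | x ∈ U}), mul_sum]
  · refine sum_congr rfl fun x hx => ?_
    rw [sum_const, hcount x hx, nsmul_eq_mul]
    push_cast
    rfl
  · intro U x
    simp only [mem_filter, mem_powersetCard]
    exact ⟨fun ⟨⟨hUX, hU⟩, hx⟩ => ⟨⟨⟨hUX, hU⟩, hx⟩, hUX hx⟩, fun ⟨h, _⟩ => ⟨h.1, h.2⟩⟩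

theorem sum_filter_subset_powersetCard {M : Type*} [AddCommMonoid M] {s t : Finset α} {n : ℕ}
    (hst : s ⊆ t) (hsn : #s ≤ n) (φ : Finset α → M) :
    ∑ u ∈ t.powersetCard n with s ⊆ u, φ u = ∑ u ∈ (t \ s).powersetCard (n - #s), φ (u ∪ s) := by
  rw [filter_powersetCard_subset s t n hst hsn, sum_image]
  intro a ha b hb hab
  have hdisj : ∀ u ∈ ((t \ s).powersetCard (n - #s) : Set (Finset α)), Disjoint u s :=
    fun u hu => disjoint_of_subset_left (mem_powersetCard.1 hu).1 sdiff_disjoint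
  rw [← union_sdiff_cancel_right (hdisj a ha), ← union_sdiff_cancel_right (hdisj b hb)]
  exact congrArg (· \ s) hab

end Finset

section pairSum

variable {V : Type*} [DecidableEq V] (g : V → V → ℝ)

theorem pairSum_union (hg : ∀ u v, g u v = g v u) {A B : Finset V} (h : Disjoint A B) :
    pairSum g (A ∪ B) = pairSum g A + ∑ a ∈ A, ∑ b ∈ B, g a b + pairSum g B := by
  have hBA : ∑ p ∈ B ×ˢ A, g p.1 p.2 = ∑ a ∈ A, ∑ b ∈ B, g a b := by
    rw [sum_product, sum_comm]
    simp only [hg]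
  unfold pairSum
  rw [offDiag_union h, sum_union, sum_union, sum_union, sum_product, hBA]
  · ring
  all_goals
    rw [disjoint_left] at h ⊢
    simp only [mem_union, mem_offDiag, mem_product, Prod.forall]
    grind

theorem sum_powersetCard_pairSum (X : Finset V) (m : ℕ) :
    ∑ U ∈ X.powersetCard m, pairSum g U
      = (if 2 ≤ m then ((#X - 2).choose (m - 2) : ℝ) else 0) * pairSum g X := by
  have hcount : ∀ p ∈ X.offDiag, #{U ∈ X.powersetCard m | p ∈ U.offDiag}
      = if 2 ≤ m then (#X - 2).choose (m - 2) else 0 := by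
    rintro ⟨a, b⟩ hp
    obtain ⟨ha, hb, hab⟩ := mem_offDiag.1 hp
    have hsub : {a, b} ⊆ X := insert_subset ha (singleton_subset_iff.2 hb)
    rw [← card_pair hab, ← card_filter_powersetCard_subset_eq_ite hsub m]
    congr 1
    refine filter_congr fun U _ => ?_
    simp [insert_subset_iff, hab]
  unfold pairSum
  rw [← sum_div, mul_div_assoc']
  congr 1
  rw [sum_comm' (t' := X.offDiag) (s' := fun p => {U ∈ X.powersetCard m | p ∈ U.offDiag}), mul_sum]
  · refine sum_congr rfl fun p hp => ?_
    rw [sum_const, hcount p hp, nsmul_eq_mul]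
    push_cast
    rfl
  · intro U p
    simp only [mem_filter, mem_powersetCard, mem_offDiag]
    grind

end pairSum

theorem midzuno_sen_inclusion_probability_general {V : Type*} [DecidableEq V] (S : Finset V)
    (n k t : ℕ) (hn : S.card = n)
    (g : V → V → ℝ) (hgsym : ∀ u v, g u v = g v u)
    (R : Finset V) (hR : R ⊆ S) (ht : R.card = t) (htk : t ≤ k) :
    (∑ T ∈ (S.powersetCard k).filter (fun T => R ⊆ T),
        pairSum g T / (((n - 2).choose (k - 2) : ℝ) * pairSum g S))
      = (1 / (((n - 2).choose (k - 2) : ℝ) * pairSum g S))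
          * (((n - t).choose (k - t) : ℝ) * pairSum g R
            + (if t + 1 ≤ k then ((n - t - 1).choose (k - t - 1) : ℝ) else 0)
                * (∑ r ∈ R, ∑ x ∈ S \ R, g r x)
            + (if t + 2 ≤ k then ((n - t - 2).choose (k - t - 2) : ℝ) else 0)
                * pairSum g (S \ R)) := by
  have hcard : #(S \ R) = n - t := by rw [card_sdiff_of_subset hR, hn, ht]
  have hcross : ∑ x ∈ S \ R, ∑ r ∈ R, g x r = ∑ r ∈ R, ∑ x ∈ S \ R, g r x := by
    rw [sum_comm]
    simp only [hgsym]
  have hone : 1 ≤ k - t ↔ t + 1 ≤ k := by omega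
  have htwo : 2 ≤ k - t ↔ t + 2 ≤ k := by omega
  rw [← sum_div, one_div_mul_eq_div, sum_filter_subset_powersetCard hR (ht ▸ htk), ht]
  congr 1
  calc ∑ U ∈ (S \ R).powersetCard (k - t), pairSum g (U ∪ R)
      = ∑ U ∈ (S \ R).powersetCard (k - t),
          (pairSum g U + ∑ x ∈ U, ∑ r ∈ R, g x r + pairSum g R) :=
        sum_congr rfl fun U hU =>
          pairSum_union g hgsym (disjoint_of_subset_left (mem_powersetCard.1 hU).1 sdiff_disjoint)
    _ = _ := by
      rw [sum_add_distrib, sum_add_distrib, sum_powersetCard_pairSum, sum_powersetCard_sum,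
        sum_const, card_powersetCard, nsmul_eq_mul, hcard, hcross, if_congr hone rfl rfl,
        if_congr htwo rfl rfl]
      ring

/-- Inclusion probability under the Midzuno–Sen proposal
`q(S_k) = g(S_k)/(C(n-2,k-2)·G)`: for a set `R` of `t ≤ k` vertices,
`π(R) = (1/(C(n-2,k-2)·G)) · [ C(n-t,k-t)·∑_{{a,b}⊆R} g(a,b)
  + C(n-t-1,k-t-1)·∑_{r∈R, x∉R} g(r,x) + C(n-t-2,k-t-2)·∑_{{x,y}⊆S∖R} g(x,y) ]`,
with binomial coefficients of negative lower index interpreted as `0`. -/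
theorem midzuno_sen_inclusion_probability {V : Type*} [DecidableEq V] (S : Finset V)
    (n k t : ℕ) (hn : S.card = n) (hk2 : 2 ≤ k) (hkn : k ≤ n)
    (g : V → V → ℝ) (hgsym : ∀ u v, g u v = g v u) (hg0 : ∀ u v, 0 ≤ g u v)
    (hG : 0 < pairSum g S)
    (R : Finset V) (hR : R ⊆ S) (ht : R.card = t) (htk : t ≤ k) :
    (∑ T ∈ (S.powersetCard k).filter (fun T => R ⊆ T),
        pairSum g T / (((n - 2).choose (k - 2) : ℝ) * pairSum g S))
      = (1 / (((n - 2).choose (k - 2) : ℝ) * pairSum g S))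
          * (((n - t).choose (k - t) : ℝ) * pairSum g R
            + (if t + 1 ≤ k then ((n - t - 1).choose (k - t - 1) : ℝ) else 0)
                * (∑ r ∈ R, ∑ x ∈ S \ R, g r x)
            + (if t + 2 ≤ k then ((n - t - 2).choose (k - t - 2) : ℝ) else 0)
                * pairSum g (S \ R)) :=
  midzuno_sen_inclusion_probability_general S n k t hn g hgsym R hR ht htk
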